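/- arXiv:1512.05705 — 6 statements merged into one kernel-verified Lean document; each statement's English description precedes it below -/
import Mathlib

section
/- Let 0 < δ and 2δ ≤ ε. Let c : ℝ → ℝ be positive on [0, ε] and satisfy c(t) ≥ c(t + ε − δ) for all t ∈ [0, δ]. Let r : ℝ → ℝ satisfy 0 ≤ r(t) ≤ c(t) on [0, ε], and let β ∈ [0, 1]. Assume t ↦ r(t)/c(t) is interval integrable on [0, ε] and t ↦ r(t + ε − δ)/c(t) is interval integrable on [0, δ]. Then ∫₀^ε r(t)/c(t) dt ≥ ∫₀^δ (r(t) + β·r(t + ε − δ))/c(t) dt + ∫_δ^{ε−δ} r(t)/c(t) dt + (1 − β)·∫_{ε−δ}^ε r(t)/c(t) dt. -/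
/-!
Splitting `[0, ε]` at `δ` and `ε - δ`, the difference of the two sides is
`β * (∫_{ε-δ}^ε r/c - ∫_0^δ r(t + ε - δ)/c(t))`. After shifting `∫_{ε-δ}^ε` back to `[0, δ]`,
the bracket is nonnegative pointwise, because `r ≥ 0` and `c(t + ε - δ) ≤ c(t)`.
-/

open MeasureTheory intervalIntegral

theorem intervalIntegral.integral_comp_add_right_div_le {f c : ℝ → ℝ} {a b s : ℝ} (hab : a ≤ b)
    (hf : ∀ t ∈ Set.Icc a b, 0 ≤ f (t + s)) (hc : ∀ t ∈ Set.Icc a b, 0 < c (t + s))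
    (hc_le : ∀ t ∈ Set.Icc a b, c (t + s) ≤ c t)
    (hint : IntervalIntegrable (fun t => f (t + s) / c t) volume a b)
    (hint_shift : IntervalIntegrable (fun t => f t / c t) volume (a + s) (b + s)) :
    ∫ t in a..b, f (t + s) / c t ≤ ∫ t in a + s..b + s, f t / c t := by
  rw [← integral_comp_add_right]
  have hint_back : IntervalIntegrable (fun t => f (t + s) / c (t + s)) volume a b := by
    simpa only [add_sub_cancel_right] using hint_shift.comp_add_right s
  exact integral_mono_on hab hint hint_back fun t ht =>
    div_le_div_of_nonneg_left (hf t ht) (hc t ht) (hc_le t ht)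

theorem intervalIntegral.integral_add_adjacent_intervals_of_mem_uIcc {f : ℝ → ℝ} {a b c d : ℝ}
    (hf : IntervalIntegrable f volume a d) (hb : b ∈ Set.uIcc a d) (hc : c ∈ Set.uIcc a d) :
    ∫ t in a..d, f t = (∫ t in a..b, f t) + (∫ t in b..c, f t) + ∫ t in c..d, f t := by
  have sub {x y : ℝ} (hx : x ∈ Set.uIcc a d) (hy : y ∈ Set.uIcc a d) :
      IntervalIntegrable f volume x y :=
    hf.mono_set (Set.uIcc_subset_uIcc hx hy)
  rw [integral_add_adjacent_intervals (sub Set.left_mem_uIcc hb) (sub hb hc),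
    integral_add_adjacent_intervals (sub Set.left_mem_uIcc hc) (sub hc Set.right_mem_uIcc)]

theorem swapping_inequality_general (δ ε : ℝ) (c r : ℝ → ℝ) (β : ℝ)
    (hδ : 0 < δ) (hε : 2 * δ ≤ ε)
    (hc_pos : ∀ t ∈ Set.Icc (0 : ℝ) ε, 0 < c t)
    (hc_dec : ∀ t ∈ Set.Icc (0 : ℝ) δ, c t ≥ c (t + ε - δ))
    (hr_nonneg : ∀ t ∈ Set.Icc (0 : ℝ) ε, 0 ≤ r t)
    (hβ : β ∈ Set.Icc (0 : ℝ) 1)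
    (hint1 : IntervalIntegrable (fun t => r t / c t) volume 0 ε)
    (hint2 : IntervalIntegrable (fun t => r (t + ε - δ) / c t) volume 0 δ) :
    (∫ t in (0:ℝ)..ε, r t / c t) ≥
      (∫ t in (0:ℝ)..δ, (r t + β * r (t + ε - δ)) / c t)
        + (∫ t in δ..(ε - δ), r t / c t)
        + (1 - β) * ∫ t in (ε - δ)..ε, r t / c t := by
  have hδ_mem : δ ∈ Set.uIcc 0 ε := Set.mem_uIcc_of_le hδ.le (by linarith)
  have hεδ_mem : ε - δ ∈ Set.uIcc 0 ε := Set.mem_uIcc_of_le (by linarith) (by linarith)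
  have hshift_mem : ∀ t ∈ Set.Icc (0 : ℝ) δ, t + (ε - δ) ∈ Set.Icc (0 : ℝ) ε :=
    fun t ht => ⟨by linarith [ht.1], by linarith [ht.2]⟩
  have hsplit := integral_add_adjacent_intervals_of_mem_uIcc hint1 hδ_mem hεδ_mem
  have hexpand : ∫ t in (0:ℝ)..δ, (r t + β * r (t + ε - δ)) / c t =
      (∫ t in (0:ℝ)..δ, r t / c t) + β * ∫ t in (0:ℝ)..δ, r (t + ε - δ) / c t := by
    simp_rw [add_div, mul_div_assoc]
    rw [integral_add (hint1.mono_set (Set.uIcc_subset_uIcc_left hδ_mem)) (hint2.const_mul β),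
      intervalIntegral.integral_const_mul]
  have hswap : ∫ t in (0:ℝ)..δ, r (t + ε - δ) / c t ≤ ∫ t in (ε - δ)..ε, r t / c t := by
    simp_rw [add_sub_assoc] at hint2 hc_dec ⊢
    have hε_eq : δ + (ε - δ) = ε := by ring
    have hint_shift :
        IntervalIntegrable (fun t => r t / c t) volume (0 + (ε - δ)) (δ + (ε - δ)) := by
      rw [zero_add, hε_eq]
      exact hint1.mono_set (Set.uIcc_subset_uIcc hεδ_mem Set.right_mem_uIcc)
    have h := integral_comp_add_right_div_le hδ.le (fun t ht => hr_nonneg _ (hshift_mem t ht))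
      (fun t ht => hc_pos _ (hshift_mem t ht)) hc_dec hint2 hint_shift
    rwa [zero_add, hε_eq] at h
  rw [hsplit, hexpand]
  linarith [mul_le_mul_of_nonneg_left hswap hβ.1]

/-- Key swapping inequality (inequality (10)) for the threshold transmission schedule:
moving a fraction `β` of the data transmitted in the low-capacity region `[ε−δ, ε]`
to the high-capacity region `[0, δ]` does not increase the utilization cost. -/
theorem swapping_inequality (δ ε : ℝ) (c r : ℝ → ℝ) (β : ℝ)
    (hδ : 0 < δ) (hε : 2 * δ ≤ ε)
    (hc_pos : ∀ t ∈ Set.Icc (0 : ℝ) ε, 0 < c t)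
    (hc_dec : ∀ t ∈ Set.Icc (0 : ℝ) δ, c t ≥ c (t + ε - δ))
    (hr_nonneg : ∀ t ∈ Set.Icc (0 : ℝ) ε, 0 ≤ r t)
    (hr_le : ∀ t ∈ Set.Icc (0 : ℝ) ε, r t ≤ c t)
    (hβ : β ∈ Set.Icc (0 : ℝ) 1)
    (hint1 : IntervalIntegrable (fun t => r t / c t) volume 0 ε)
    (hint2 : IntervalIntegrable (fun t => r (t + ε - δ) / c t) volume 0 δ) :
    (∫ t in (0:ℝ)..ε, r t / c t) ≥
      (∫ t in (0:ℝ)..δ, (r t + β * r (t + ε - δ)) / c t)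
        + (∫ t in δ..(ε - δ), r t / c t)
        + (1 - β) * ∫ t in (ε - δ)..ε, r t / c t :=
  swapping_inequality_general δ ε c r β hδ hε hc_pos hc_dec hr_nonneg hβ hint1 hint2
end

section
/- Let 0 < δ and 2δ ≤ ε. Let c : ℝ → ℝ be positive on [0, ε] and satisfy c(t) ≥ c(t + ε − δ) for all t ∈ [0, δ]. Let r : ℝ → ℝ satisfy 0 ≤ r(t) ≤ c(t) on [0, ε], let β ∈ [0, 1], and assume t ↦ r(t)/c(t) is interval integrable on [0, ε] and t ↦ r(t + ε − δ)/c(t) is interval integrable on [0, δ]. Suppose moreover that ∫₀^δ (r(t) + β·r(t + ε − δ))/c(t) dt = δ. Define the new schedule r′ by r′(t) = c(t) for t ∈ [0, δ), r′(t) = r(t) for t ∈ [δ, ε − δ), and r′(t) = (1 − β)·r(t) for t ∈ [ε − δ, ε]. Then ∫₀^ε r′(t)/c(t) dt ≤ ∫₀^ε r(t)/c(t) dt. -/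
open MeasureTheory intervalIntegral Set
open scoped Interval

/-!
Filling `[0, δ]` to capacity costs exactly `δ`, which by the fill condition is the old cost on
`[0, δ]` plus `β ∫₀^δ r(t + ε - δ) / c(t) dt`. Because `c` only decreases under the shift
`t ↦ t + ε - δ`, that integral is at most the old cost on `[ε - δ, ε]`, and a `β`-fraction of
this is exactly what `r′` saves there.
-/

section Piecewise

variable {E : Type*} {f g h : ℝ → E} {a b c d : ℝ}

theorem eqOn_ite_lt_left (hab : a ≤ b) :
    EqOn f (fun t => if t < b then f t else g t) (uIoo a b) := fun t ht => by
  rw [uIoo_of_le hab] at ht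
  exact (if_pos ht.2).symm

theorem eqOn_ite_lt_right (hbc : b ≤ c) :
    EqOn g (fun t => if t < b then f t else g t) (uIoo b c) := fun t ht => by
  rw [uIoo_of_le hbc] at ht
  exact (if_neg (not_lt.2 ht.1.le)).symm

variable [NormedAddCommGroup E]

theorem intervalIntegrable_ite_lt (hab : a ≤ b) (hbc : b ≤ c)
    (hf : IntervalIntegrable f volume a b) (hg : IntervalIntegrable g volume b c) :
    IntervalIntegrable (fun t => if t < b then f t else g t) volume a c :=
  (hf.congr_uIoo (eqOn_ite_lt_left hab)).trans (hg.congr_uIoo (eqOn_ite_lt_right hbc))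

variable [NormedSpace ℝ E]

theorem integral_ite_lt (hab : a ≤ b) (hbc : b ≤ c)
    (hf : IntervalIntegrable f volume a b) (hg : IntervalIntegrable g volume b c) :
    ∫ t in a..c, (if t < b then f t else g t) = (∫ t in a..b, f t) + ∫ t in b..c, g t := by
  rw [integral_congr_uIoo (eqOn_ite_lt_left (g := g) hab),
    integral_congr_uIoo (eqOn_ite_lt_right (f := f) hbc), integral_add_adjacent_intervals
      (hf.congr_uIoo (eqOn_ite_lt_left hab)) (hg.congr_uIoo (eqOn_ite_lt_right hbc))]

theorem integral_ite_lt_ite_lt (hab : a ≤ b) (hbc : b ≤ c) (hcd : c ≤ d)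
    (hf : IntervalIntegrable f volume a b) (hg : IntervalIntegrable g volume b c)
    (hh : IntervalIntegrable h volume c d) :
    ∫ t in a..d, (if t < b then f t else if t < c then g t else h t) =
      (∫ t in a..b, f t) + (∫ t in b..c, g t) + ∫ t in c..d, h t := by
  rw [integral_ite_lt hab (hbc.trans hcd) hf (intervalIntegrable_ite_lt hbc hcd hg hh),
    integral_ite_lt hbc hcd hg hh, add_assoc]

end Piecewise

theorem IntervalIntegrable.mono_set_of_le {E : Type*} [NormedAddCommGroup E] {μ : Measure ℝ}
    {f : ℝ → E} {a b c d : ℝ} (hf : IntervalIntegrable f μ a d) (hab : a ≤ b) (hbc : b ≤ c)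
    (hcd : c ≤ d) : IntervalIntegrable f μ b c :=
  hf.mono_set <| by
    rw [uIcc_of_le hbc, uIcc_of_le (hab.trans (hbc.trans hcd))]
    exact Icc_subset_Icc hab hcd

theorem integral_ite_lt_ite_lt_div {c r : ℝ → ℝ} {a b d e k : ℝ} (hab : a ≤ b) (hbd : b ≤ d)
    (hde : d ≤ e) (hc : ∀ t ∈ Icc a b, c t ≠ 0)
    (hbd_int : IntervalIntegrable (fun t => r t / c t) volume b d)
    (hde_int : IntervalIntegrable (fun t => r t / c t) volume d e) :
    ∫ t in a..e, (if t < b then c t else if t < d then r t else k * r t) / c t =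
      (b - a) + (∫ t in b..d, r t / c t) + k * ∫ t in d..e, r t / c t := by
  have hone : EqOn (fun t => c t / c t) (fun _ => 1) [[a, b]] := fun t ht =>
    div_self (hc t (uIcc_of_le hab ▸ ht))
  simp only [ite_div, mul_div_assoc]
  rw [integral_ite_lt_ite_lt hab hbd hde
      (intervalIntegrable_const.congr (hone.symm.mono uIoc_subset_uIcc)) hbd_int
      (hde_int.const_mul k),
    integral_congr hone, intervalIntegral.integral_const_mul, intervalIntegral.integral_const,
    smul_eq_mul, mul_one]

theorem integral_comp_add_div_le_integral_div {f g : ℝ → ℝ} {a b s : ℝ} (hab : a ≤ b)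
    (hf : ∀ t ∈ Icc (a + s) (b + s), 0 ≤ f t) (hg_pos : ∀ t ∈ Icc (a + s) (b + s), 0 < g t)
    (hg : ∀ t ∈ Icc a b, g (t + s) ≤ g t)
    (hfg : IntervalIntegrable (fun t => f (t + s) / g t) volume a b)
    (hfg' : IntervalIntegrable (fun t => f t / g t) volume (a + s) (b + s)) :
    ∫ t in a..b, f (t + s) / g t ≤ ∫ t in (a + s)..(b + s), f t / g t := by
  rw [← integral_comp_add_right (fun t => f t / g t) s]
  refine integral_mono_on hab hfg (by simpa using hfg'.comp_add_right s) fun t ht => ?_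
  have hts : t + s ∈ Icc (a + s) (b + s) := ⟨by linarith [ht.1], by linarith [ht.2]⟩
  exact div_le_div_of_nonneg_left (hf _ hts) (hg_pos _ hts) (hg t ht)

theorem new_schedule_cost_le_general (δ ε : ℝ) (c r : ℝ → ℝ) (β : ℝ)
    (hδ : 0 < δ) (hε : 2 * δ ≤ ε)
    (hc_pos : ∀ t ∈ Set.Icc (0 : ℝ) ε, 0 < c t)
    (hc_dec : ∀ t ∈ Set.Icc (0 : ℝ) δ, c t ≥ c (t + ε - δ))
    (hr_nonneg : ∀ t ∈ Set.Icc (0 : ℝ) ε, 0 ≤ r t)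
    (hβ : β ∈ Set.Icc (0 : ℝ) 1)
    (hint1 : IntervalIntegrable (fun t => r t / c t) volume 0 ε)
    (hint2 : IntervalIntegrable (fun t => r (t + ε - δ) / c t) volume 0 δ)
    (hfill : (∫ t in (0:ℝ)..δ, (r t + β * r (t + ε - δ)) / c t) = δ) :
    (∫ t in (0:ℝ)..ε,
        (if t < δ then c t else if t < ε - δ then r t else (1 - β) * r t) / c t)
      ≤ ∫ t in (0:ℝ)..ε, r t / c t := by
  have hδε : δ ≤ ε - δ := by linarith
  have hA := hint1.mono_set_of_le le_rfl hδ.le (by linarith)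
  have hB := hint1.mono_set_of_le hδ.le hδε (by linarith)
  have hC := hint1.mono_set_of_le (b := ε - δ) (by linarith) (by linarith) le_rfl
  have hcost_new := integral_ite_lt_ite_lt_div (k := 1 - β) hδ.le hδε (by linarith)
    (fun t ht => (hc_pos t ⟨ht.1, by linarith [ht.2]⟩).ne') hB hC
  have hcost_old : ∫ t in (0:ℝ)..ε, r t / c t = (∫ t in (0:ℝ)..δ, r t / c t) +
      (∫ t in δ..(ε - δ), r t / c t) + ∫ t in (ε - δ)..ε, r t / c t := by
    rw [integral_add_adjacent_intervals hA hB, integral_add_adjacent_intervals (hA.trans hB) hC]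
  have hfill' : (∫ t in (0:ℝ)..δ, r t / c t) + β * ∫ t in (0:ℝ)..δ, r (t + ε - δ) / c t = δ := by
    refine Eq.trans ?_ hfill
    rw [← intervalIntegral.integral_const_mul, ← integral_add hA (hint2.const_mul β)]
    exact integral_congr fun t _ => by ring
  have hshift : ∫ t in (0:ℝ)..δ, r (t + ε - δ) / c t ≤ ∫ t in (ε - δ)..ε, r t / c t := by
    have hsub : Icc (0 + (ε - δ)) (δ + (ε - δ)) ⊆ Icc 0 ε :=
      Icc_subset_Icc (by linarith) (by linarith)
    simp only [add_sub_assoc] at hint2 hc_dec ⊢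
    simpa using integral_comp_add_div_le_integral_div hδ.le (fun t ht => hr_nonneg t (hsub ht))
      (fun t ht => hc_pos t (hsub ht)) hc_dec hint2 (by simpa using hC)
  linarith [mul_le_mul_of_nonneg_left hshift hβ.1]

/-- When the swapped data exactly fills the high-capacity region `[0, δ]`, the new
schedule `r′` (full capacity on `[0, δ)`, unchanged on `[δ, ε−δ)`, reduced by the
factor `(1 − β)` on `[ε−δ, ε]`) has a network utilization cost no larger than `r`. -/
theorem new_schedule_cost_le (δ ε : ℝ) (c r : ℝ → ℝ) (β : ℝ)
    (hδ : 0 < δ) (hε : 2 * δ ≤ ε)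
    (hc_pos : ∀ t ∈ Set.Icc (0 : ℝ) ε, 0 < c t)
    (hc_dec : ∀ t ∈ Set.Icc (0 : ℝ) δ, c t ≥ c (t + ε - δ))
    (hr_nonneg : ∀ t ∈ Set.Icc (0 : ℝ) ε, 0 ≤ r t)
    (hr_le : ∀ t ∈ Set.Icc (0 : ℝ) ε, r t ≤ c t)
    (hβ : β ∈ Set.Icc (0 : ℝ) 1)
    (hint1 : IntervalIntegrable (fun t => r t / c t) volume 0 ε)
    (hint2 : IntervalIntegrable (fun t => r (t + ε - δ) / c t) volume 0 δ)
    (hfill : (∫ t in (0:ℝ)..δ, (r t + β * r (t + ε - δ)) / c t) = δ) :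
    (∫ t in (0:ℝ)..ε,
        (if t < δ then c t else if t < ε - δ then r t else (1 - β) * r t) / c t)
      ≤ ∫ t in (0:ℝ)..ε, r t / c t :=
  new_schedule_cost_le_general δ ε c r β hδ hε hc_pos hc_dec hr_nonneg hβ hint1 hint2 hfill
end

section
/- Consider the discrete-time model with n time slots, capacities c : Fin n → ℝ with c i > 0, cumulative playback demand l : Fin n → ℝ, and total data D ∈ ℝ. Let r* be any feasible schedule that minimizes the utilization cost ∑_i r i / c i over all feasible schedules. Then r* has the threshold-ordered structure: for all indices i < j with c i > c j, if r* j > 0 then r* i = c i (every earlier slot of strictly higher capacity is fully used before any later slot of lower capacity carries positive data). -/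
open Finset

/-- A transmission schedule `r` is feasible if it respects the capacity bounds,
meets the cumulative playback demand at every slot, and delivers the total data `D`. -/
def Feasible {n : ℕ} (c l : Fin n → ℝ) (D : ℝ) (r : Fin n → ℝ) : Prop :=
  (∀ i, 0 ≤ r i ∧ r i ≤ c i) ∧
  (∀ k, l k ≤ ∑ j ∈ Finset.Iic k, r j) ∧
  (∑ i, r i = D)

/-- Discrete-time Proposition 1: a feasible schedule minimizing the utilization cost
`∑ i, r i / c i` has the threshold-ordered structure: every earlier slot of strictly
higher capacity is fully used before any later slot of lower capacity carries data. -/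
theorem optimal_schedule_threshold_ordered {n : ℕ} (c l : Fin n → ℝ)
    (hc : ∀ i, 0 < c i) (D : ℝ) (rstar : Fin n → ℝ)
    (hfeas : Feasible c l D rstar)
    (hopt : ∀ r : Fin n → ℝ, Feasible c l D r →
      (∑ i, rstar i / c i) ≤ ∑ i, r i / c i) :
    ∀ i j : Fin n, i < j → c j < c i → 0 < rstar j → rstar i = c i := by
  intro i j hij hcij hrj
  by_contra hne
  obtain ⟨hbd, hdem, htot⟩ := hfeas
  have hineq : rstar i < c i := lt_of_le_of_ne (hbd i).2 hne
  set ε : ℝ := min (c i - rstar i) (rstar j) with hε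
  have hεpos : 0 < ε := lt_min (by linarith) hrj
  have hε1 : ε ≤ c i - rstar i := min_le_left _ _
  have hε2 : ε ≤ rstar j := min_le_right _ _
  have hijne : i ≠ j := ne_of_lt hij
  set r : Fin n → ℝ := fun k =>
    rstar k + (if k = i then ε else 0) - (if k = j then ε else 0) with hr
  have hsum : ∀ s : Finset (Fin n), ∑ k ∈ s, r k =
      (∑ k ∈ s, rstar k) + (if i ∈ s then ε else 0) - (if j ∈ s then ε else 0) := by
    intro s
    simp only [hr, Finset.sum_sub_distrib, Finset.sum_add_distrib,
      Finset.sum_ite_eq' s i (fun _ => ε), Finset.sum_ite_eq' s j (fun _ => ε)]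
  have hfr : Feasible c l D r := by
    refine ⟨fun k => ?_, fun k => ?_, ?_⟩
    · rcases eq_or_ne k i with rfl | hki
      · simp only [hr, if_pos rfl, if_neg hijne, eq_self_iff_true, if_true]
        constructor <;> [linarith [(hbd k).1]; linarith]
      · rcases eq_or_ne k j with rfl | hkj
        · simp only [hr, if_neg hki, if_pos rfl, eq_self_iff_true, if_true]
          constructor <;> [linarith; linarith [(hbd k).2]]
        · simp only [hr, if_neg hki, if_neg hkj]
          simpa using hbd k
    · rw [hsum]
      have := hdem k
      by_cases hjk : j ∈ Finset.Iic k
      · have hik : i ∈ Finset.Iic k := by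
          simp only [Finset.mem_Iic] at hjk ⊢
          exact le_of_lt (lt_of_lt_of_le hij hjk)
        simp only [if_pos hjk, if_pos hik]; linarith
      · simp only [if_neg hjk]
        split <;> linarith
    · rw [hsum]
      simp only [Finset.mem_univ, if_pos]
      linarith
  have hcost := hopt r hfr
  have hcost2 : ∑ k, r k / c k =
      (∑ k, rstar k / c k) + ε / c i - ε / c j := by
    have : ∀ k, r k / c k = rstar k / c k +
        (if k = i then ε / c i else 0) - (if k = j then ε / c j else 0) := by
      intro k
      rcases eq_or_ne k i with rfl | hki
      · simp only [hr, if_pos rfl, if_neg hijne, eq_self_iff_true, if_true]; ring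
      · rcases eq_or_ne k j with rfl | hkj
        · simp only [hr, if_neg hki, if_pos rfl, eq_self_iff_true, if_true]; ring
        · simp only [hr, if_neg hki, if_neg hkj]; ring
    rw [Finset.sum_congr rfl (fun k _ => this k)]
    simp [Finset.sum_sub_distrib, Finset.sum_add_distrib,
      Finset.sum_ite_eq' Finset.univ i (fun _ => ε / c i),
      Finset.sum_ite_eq' Finset.univ j (fun _ => ε / c j)]
  rw [hcost2] at hcost
  have h1 : ε / c i < ε / c j :=
    div_lt_div_of_pos_left hεpos (hc j) hcij
  linarith
end

section
/- Consider the discrete-time model with n time slots, capacities c : Fin n → ℝ with c i > 0, cumulative playback demand l : Fin n → ℝ, and total data D ∈ ℝ. Let r be a feasible schedule, let i < j be slots with c i > c j, and let x be a real number with 0 < x ≤ min(c i − r i, r j). Define r′ by r′ i = r i + x, r′ j = r j − x, and r′ k = r k for all k ≠ i, j. Then r′ is also feasible and has strictly smaller utilization cost: ∑_k r′ k / c k < ∑_k r k / c k. -/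
open Finset

lemma sum_swap_aux {n : ℕ} (i j : Fin n) (hij : i ≠ j) (a b : ℝ)
    (s : Finset (Fin n)) :
    ∑ k ∈ s, (if k = i then a else if k = j then b else 0) =
      (if i ∈ s then a else 0) + (if j ∈ s then b else 0) := by
  have : ∀ k ∈ s, (if k = i then a else if k = j then b else 0)
      = (if k = i then a else 0) + (if k = j then b else 0) := by
    intro k _
    rcases eq_or_ne k i with rfl | hki
    · simp [hij]
    · simp [hki]
  rw [Finset.sum_congr rfl this, Finset.sum_add_distrib,
    Finset.sum_ite_eq' s i (fun _ => a), Finset.sum_ite_eq' s j (fun _ => b)]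

/-- Swap lemma: moving an amount `x` of data from a later low-capacity slot `j` to an
earlier high-capacity slot `i` preserves feasibility and strictly reduces the cost. -/
theorem swap_preserves_feasibility_and_reduces_cost {n : ℕ} (c l : Fin n → ℝ)
    (hc : ∀ i, 0 < c i) (D : ℝ) (r : Fin n → ℝ)
    (hfeas : Feasible c l D r) (i j : Fin n) (hij : i < j) (hcij : c j < c i)
    (x : ℝ) (hx_pos : 0 < x) (hx_le : x ≤ min (c i - r i) (r j)) :
    Feasible c l D
      (fun k => if k = i then r i + x else if k = j then r j - x else r k) ∧
    (∑ k, (if k = i then r i + x else if k = j then r j - x else r k) / c k)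
      < ∑ k, r k / c k := by
  obtain ⟨hbd, hdem, htot⟩ := hfeas
  have hne : i ≠ j := ne_of_lt hij
  have hx1 : x ≤ c i - r i := le_trans hx_le (min_le_left _ _)
  have hx2 : x ≤ r j := le_trans hx_le (min_le_right _ _)
  set r' : Fin n → ℝ := fun k => if k = i then r i + x else if k = j then r j - x else r k
    with hr'
  have hdiff : ∀ k, r' k - r k = (if k = i then x else if k = j then -x else 0) := by
    intro k
    rcases eq_or_ne k i with rfl | hki
    · simp [hr', hne.symm]
    · rcases eq_or_ne k j with rfl | hkj
      · simp [hr', hki]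
      · simp [hr', hki, hkj]
  have hsum : ∀ s : Finset (Fin n), ∑ k ∈ s, r' k =
      ∑ k ∈ s, r k + ((if i ∈ s then x else 0) + (if j ∈ s then -x else 0)) := by
    intro s
    have := sum_swap_aux i j hne x (-x) s
    have h2 : ∑ k ∈ s, (r' k - r k) =
        (if i ∈ s then x else 0) + (if j ∈ s then -x else 0) := by
      rw [Finset.sum_congr rfl (fun k _ => hdiff k), this]
    rw [Finset.sum_sub_distrib] at h2
    linarith
  refine ⟨⟨?_, ?_, ?_⟩, ?_⟩
  · intro k
    rcases eq_or_ne k i with rfl | hki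
    · constructor
      · simp [hr']
        have := (hbd k).1
        linarith
      · simp [hr']
        linarith
    · rcases eq_or_ne k j with rfl | hkj
      · constructor
        · simp [hr', hki]
          linarith
        · simp [hr', hki]
          have := (hbd k).2
          have := hc k
          linarith
      · simpa [hr', hki, hkj] using hbd k
  · intro k
    have h := hsum (Finset.Iic k)
    have hdk := hdem k
    by_cases hjk : j ∈ Finset.Iic k
    · have hik : i ∈ Finset.Iic k := by
        simp only [Finset.mem_Iic] at *
        exact le_of_lt (lt_of_lt_of_le hij hjk)
      rw [h]
      simp [hik, hjk]
      linarith
    · rw [h]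
      by_cases hik : i ∈ Finset.Iic k
      · simp [hik, hjk]; linarith
      · simp [hik, hjk]; linarith
  · have h := hsum Finset.univ
    simp at h
    rw [h, htot]
  · have hcost : ∀ k, r' k / c k - r k / c k =
        (if k = i then x / c i else if k = j then -(x / c j) else 0) := by
      intro k
      rcases eq_or_ne k i with rfl | hki
      · simp [hr', hne.symm]; ring
      · rcases eq_or_ne k j with rfl | hkj
        · simp [hr', hki]; ring
        · simp [hr', hki, hkj]
    have h2 : ∑ k, (r' k / c k - r k / c k) =
        (if i ∈ Finset.univ then x / c i else 0) +
        (if j ∈ Finset.univ then -(x / c j) else 0) := by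
      rw [Finset.sum_congr rfl (fun k _ => hcost k),
        sum_swap_aux i j hne (x / c i) (-(x / c j)) Finset.univ]
    simp only [Finset.mem_univ, if_true] at h2
    rw [Finset.sum_sub_distrib] at h2
    have hlt : x / c i < x / c j := by
      apply div_lt_div_of_pos_left hx_pos (hc j) hcij
    linarith
end

section
/- Let 0 ≤ τ, τ + δ ≤ τ′, τ′ + δ′ ≤ T with δ, δ′ ≥ 0. Let f, f′ : ℝ → ℝ be integrable on [0, T] and satisfy: f′(t) ≥ f(t) for all t ∈ [τ, τ + δ); f′(t) ≤ f(t) for all t ∈ [τ′, τ′ + δ′); f′(t) = f(t) for all other t ∈ [0, T]; and ∫_τ^{τ+δ} (f′(t) − f(t)) dt = ∫_{τ′}^{τ′+δ′} (f(t) − f′(t)) dt. Then for every t ∈ [0, T], ∫₀^t f′(s) ds ≥ ∫₀^t f(s) ds. -/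
open MeasureTheory intervalIntegral

private lemma ioo_int_zero (g : ℝ → ℝ) {a b : ℝ} (hab : a ≤ b)
    (h : ∀ x ∈ Set.Ioo a b, g x = 0) : (∫ x in a..b, g x) = 0 := by
  rw [intervalIntegral.integral_of_le hab, MeasureTheory.integral_Ioc_eq_integral_Ioo]
  calc (∫ x in Set.Ioo a b, g x) = ∫ _x in Set.Ioo a b, (0 : ℝ) :=
        MeasureTheory.setIntegral_congr_fun measurableSet_Ioo h
    _ = 0 := by simp

private lemma ioo_int_nonneg (g : ℝ → ℝ) {a b : ℝ} (hab : a ≤ b)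
    (h : ∀ x ∈ Set.Ioo a b, 0 ≤ g x) : 0 ≤ ∫ x in a..b, g x := by
  rw [intervalIntegral.integral_of_le hab, MeasureTheory.integral_Ioc_eq_integral_Ioo]
  exact MeasureTheory.setIntegral_nonneg measurableSet_Ioo h

private lemma ioo_int_nonpos (g : ℝ → ℝ) {a b : ℝ} (hab : a ≤ b)
    (h : ∀ x ∈ Set.Ioo a b, g x ≤ 0) : (∫ x in a..b, g x) ≤ 0 := by
  rw [intervalIntegral.integral_of_le hab, MeasureTheory.integral_Ioc_eq_integral_Ioo]
  exact MeasureTheory.setIntegral_nonpos measurableSet_Ioo h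

/-- Key lemma for Proposition 2 (ascending bitrate levels): if the frame-rate
function `f′` obtained after switching bitrate levels dominates `f` on the earlier
interval `[τ, τ+δ)`, is dominated by `f` on the later interval `[τ′, τ′+δ′)`,
agrees with `f` elsewhere on `[0, T]`, and the gained and lost masses balance,
then the cumulative number of arrived frames never decreases:
`∫₀^t f′ ≥ ∫₀^t f` for every `t ∈ [0, T]`. -/
theorem switching_cumulative_ge (T τ δ τ' δ' : ℝ) (f f' : ℝ → ℝ)
    (hτ : 0 ≤ τ) (hδ : 0 ≤ δ) (hδ' : 0 ≤ δ')
    (hττ' : τ + δ ≤ τ') (hτ'T : τ' + δ' ≤ T)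
    (hf : IntervalIntegrable f volume 0 T)
    (hf' : IntervalIntegrable f' volume 0 T)
    (hge : ∀ t ∈ Set.Ico τ (τ + δ), f t ≤ f' t)
    (hle : ∀ t ∈ Set.Ico τ' (τ' + δ'), f' t ≤ f t)
    (heq : ∀ t ∈ Set.Icc (0 : ℝ) T,
      t ∉ Set.Ico τ (τ + δ) → t ∉ Set.Ico τ' (τ' + δ') → f' t = f t)
    (hbal : (∫ t in τ..(τ + δ), (f' t - f t)) = ∫ t in τ'..(τ' + δ'), (f t - f' t)) :
    ∀ t ∈ Set.Icc (0 : ℝ) T, (∫ s in (0:ℝ)..t, f s) ≤ ∫ s in (0:ℝ)..t, f' s := by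
  intro t ht
  obtain ⟨ht0, htT⟩ := ht
  have hT0 : (0:ℝ) ≤ T := by linarith
  have hτδ : τ ≤ τ + δ := by linarith
  have hτ'δ' : τ' ≤ τ' + δ' := by linarith
  -- integrability on subintervals
  have hmemf : ∀ a : ℝ, 0 ≤ a → a ≤ T → a ∈ Set.uIcc (0:ℝ) T := by
    intro a ha haT; rw [Set.uIcc_of_le hT0]; exact ⟨ha, haT⟩
  have hsubf : ∀ a b : ℝ, 0 ≤ a → a ≤ T → 0 ≤ b → b ≤ T →
      IntervalIntegrable f volume a b := by
    intro a b h1 h2 h3 h4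
    exact hf.mono_set (Set.uIcc_subset_uIcc (hmemf a h1 h2) (hmemf b h3 h4))
  have hsubf' : ∀ a b : ℝ, 0 ≤ a → a ≤ T → 0 ≤ b → b ≤ T →
      IntervalIntegrable f' volume a b := by
    intro a b h1 h2 h3 h4
    exact hf'.mono_set (Set.uIcc_subset_uIcc (hmemf a h1 h2) (hmemf b h3 h4))
  have hsub : ∀ a b : ℝ, 0 ≤ a → a ≤ T → 0 ≤ b → b ≤ T →
      IntervalIntegrable (fun s => f' s - f s) volume a b := by
    intro a b h1 h2 h3 h4
    exact (hsubf' a b h1 h2 h3 h4).sub (hsubf a b h1 h2 h3 h4)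
  -- it suffices to show the integral of the difference is nonnegative
  suffices hkey : 0 ≤ ∫ s in (0:ℝ)..t, (f' s - f s) by
    rw [intervalIntegral.integral_sub (hsubf' 0 t le_rfl hT0 ht0 htT)
      (hsubf 0 t le_rfl hT0 ht0 htT)] at hkey
    linarith
  -- pointwise facts about g := f' - f
  have hgz : ∀ x, 0 ≤ x → x ≤ T → x ∉ Set.Ico τ (τ + δ) → x ∉ Set.Ico τ' (τ' + δ') →
      f' x - f x = 0 := by
    intro x h1 h2 h3 h4
    rw [heq x ⟨h1, h2⟩ h3 h4]; ring
  -- balance in terms of g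
  have hbal2 : (∫ s in τ..(τ + δ), (f' s - f s)) = -(∫ s in τ'..(τ' + δ'), (f' s - f s)) := by
    rw [hbal, intervalIntegral.integral_sub
        (hsubf τ' (τ'+δ') (by linarith) (by linarith) (by linarith) hτ'T)
        (hsubf' τ' (τ'+δ') (by linarith) (by linarith) (by linarith) hτ'T),
      intervalIntegral.integral_sub
        (hsubf' τ' (τ'+δ') (by linarith) (by linarith) (by linarith) hτ'T)
        (hsubf τ' (τ'+δ') (by linarith) (by linarith) (by linarith) hτ'T)]
    ring
  rcases le_or_gt t τ' with h1 | h1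
  · -- before τ': the difference is nonnegative on (0, t)
    apply ioo_int_nonneg _ ht0
    intro x hx
    by_cases hx1 : x ∈ Set.Ico τ (τ + δ)
    · linarith [hge x hx1]
    · have hx2 : x ∉ Set.Ico τ' (τ' + δ') := by
        intro h; exact absurd h.1 (not_le.2 (lt_of_lt_of_le hx.2 h1))
      rw [hgz x hx.1.le (by linarith [hx.2]) hx1 hx2]
  · -- after τ'
    have F1 : (∫ s in (0:ℝ)..τ, (f' s - f s)) = 0 := by
      apply ioo_int_zero _ hτ
      intro x hx
      exact hgz x hx.1.le (by linarith [hx.2])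
        (fun h => absurd h.1 (not_le.2 hx.2))
        (fun h => absurd h.1 (not_le.2 (by linarith [hx.2])))
    have F2 : (∫ s in (τ+δ)..τ', (f' s - f s)) = 0 := by
      apply ioo_int_zero _ hττ'
      intro x hx
      exact hgz x (by linarith [hx.1]) (by linarith [hx.2])
        (fun h => absurd h.2 (not_lt.2 hx.1.le))
        (fun h => absurd h.1 (not_le.2 hx.2))
    have e1 : (∫ s in (0:ℝ)..t, (f' s - f s)) =
        (∫ s in (0:ℝ)..τ, (f' s - f s)) + (∫ s in τ..(τ+δ), (f' s - f s)) +
        (∫ s in (τ+δ)..τ', (f' s - f s)) + (∫ s in τ'..t, (f' s - f s)) := by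
      rw [intervalIntegral.integral_add_adjacent_intervals
          (hsub 0 τ le_rfl (by linarith) hτ (by linarith))
          (hsub τ (τ+δ) hτ (by linarith) (by linarith) (by linarith)),
        intervalIntegral.integral_add_adjacent_intervals
          (hsub 0 (τ+δ) le_rfl hT0 (by linarith) (by linarith))
          (hsub (τ+δ) τ' (by linarith) (by linarith) (by linarith) (by linarith)),
        intervalIntegral.integral_add_adjacent_intervals
          (hsub 0 τ' le_rfl hT0 (by linarith) (by linarith))
          (hsub τ' t (by linarith) (by linarith) ht0 htT)]
    rcases le_or_gt t (τ' + δ') with h2 | h2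
    · -- t inside the second interval
      have e2 : (∫ s in τ'..(τ'+δ'), (f' s - f s)) =
          (∫ s in τ'..t, (f' s - f s)) + (∫ s in t..(τ'+δ'), (f' s - f s)) := by
        rw [intervalIntegral.integral_add_adjacent_intervals
          (hsub τ' t (by linarith) (by linarith) ht0 htT)
          (hsub t (τ'+δ') ht0 htT (by linarith) hτ'T)]
      have hlast : (∫ s in t..(τ'+δ'), (f' s - f s)) ≤ 0 := by
        apply ioo_int_nonpos _ h2
        intro x hx
        have : x ∈ Set.Ico τ' (τ' + δ') := ⟨by linarith [hx.1], hx.2⟩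
        linarith [hle x this]
      rw [e1, F1, F2]
      linarith [hbal2, e2]
    · -- t after the second interval
      have F3 : (∫ s in (τ'+δ')..t, (f' s - f s)) = 0 := by
        apply ioo_int_zero _ h2.le
        intro x hx
        exact hgz x (by linarith [hx.1]) (by linarith [hx.2])
          (fun h => absurd h.2 (not_lt.2 (by linarith [hx.1])))
          (fun h => absurd h.2 (not_lt.2 hx.1.le))
      have e2 : (∫ s in τ'..t, (f' s - f s)) =
          (∫ s in τ'..(τ'+δ'), (f' s - f s)) + (∫ s in (τ'+δ')..t, (f' s - f s)) := by
        rw [intervalIntegral.integral_add_adjacent_intervals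
          (hsub τ' (τ'+δ') (by linarith) (by linarith) (by linarith) hτ'T)
          (hsub (τ'+δ') t (by linarith) hτ'T ht0 htT)]
      rw [e1, F1, F2, e2, F3]
      linarith [hbal2]
end

section
/- Let N be a natural number, b : Fin N → ℝ a family of bitrates, S > 0 the number of frames per segment, λ > 0 the playback frame rate, and C : Fin N → ℝ the cumulative data budget by the playback deadline of each segment. Call an arrangement (permutation) σ of Fin N feasible if for every k, (S/λ)·∑_{j ≤ k} b(σ(j)) ≤ C k. If some permutation σ is feasible, and τ is a permutation of Fin N such that b ∘ τ is monotone nondecreasing, then τ is feasible. -/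
open Finset

lemma fin_strictMono_le {m N : ℕ} {g : Fin m → Fin N} (hg : StrictMono g) :
    ∀ v (hv : v < m), v ≤ (g ⟨v, hv⟩ : ℕ) := by
  intro v
  induction v with
  | zero => simp
  | succ v ih =>
    intro hv
    have h1 := ih (by omega)
    have h2 := hg (show (⟨v, by omega⟩ : Fin m) < ⟨v + 1, hv⟩ by simp [Fin.lt_def])
    simp only [Fin.lt_def] at h2
    omega

lemma sorted_prefix_min {N : ℕ} (f : Fin N → ℝ) (hf : Monotone f) (k : Fin N)
    (s : Finset (Fin N)) (hs : s.card = (k : ℕ) + 1) :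
    ∑ j ∈ Finset.Iic k, f j ≤ ∑ i ∈ s, f i := by
  have hk1 : (k : ℕ) + 1 ≤ N := k.isLt
  set e : Fin ((k : ℕ) + 1) ↪o Fin N := s.orderEmbOfFin hs with he
  have himg : Finset.univ.image e = s := by
    apply Finset.coe_injective
    rw [Finset.coe_image, Finset.coe_univ, Set.image_univ]
    exact s.range_orderEmbOfFin hs
  have h2 : Finset.Iic k = Finset.univ.image (Fin.castLE hk1) := by
    ext j
    simp only [Finset.mem_Iic, Finset.mem_image, Finset.mem_univ, true_and]
    constructor
    · intro h
      exact ⟨⟨(j : ℕ), by have := Fin.le_def.mp h; omega⟩, by simp [Fin.ext_iff]⟩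
    · rintro ⟨i, rfl⟩
      simp only [Fin.le_def, Fin.coe_castLE]
      omega
  rw [h2, Finset.sum_image (by intro x _ y _ h; exact Fin.castLE_injective hk1 h),
    ← himg, Finset.sum_image (by intro x _ y _ h; exact e.injective h)]
  apply Finset.sum_le_sum
  intro i _
  apply hf
  rw [Fin.le_def]
  simpa using fin_strictMono_le e.strictMono (i : ℕ) i.isLt

/-- Discrete form of Proposition 2: if some arrangement of the bitrate levels meets
all cumulative-data (re-buffering) deadlines, then the ascending arrangement does
too. Here an arrangement `σ` is feasible when for every segment `k`, the data
`(S/λ) * ∑_{j ≤ k} b (σ j)` needed for the first segments does not exceed the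
cumulative budget `C k`. -/
theorem ascending_arrangement_feasible (N : ℕ) (b : Fin N → ℝ)
    (S lam : ℝ) (hS : 0 < S) (hlam : 0 < lam) (C : Fin N → ℝ)
    (σ : Equiv.Perm (Fin N))
    (hσ : ∀ k : Fin N, (S / lam) * ∑ j ∈ Finset.Iic k, b (σ j) ≤ C k)
    (τ : Equiv.Perm (Fin N)) (hτ : Monotone (b ∘ τ)) :
    ∀ k : Fin N, (S / lam) * ∑ j ∈ Finset.Iic k, b (τ j) ≤ C k := by
  intro k
  refine le_trans ?_ (hσ k)
  apply mul_le_mul_of_nonneg_left ?_ (by positivity)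
  set s : Finset (Fin N) := (Finset.Iic k).image (fun j => τ.symm (σ j)) with hs
  have hinj : Function.Injective (fun j => τ.symm (σ j)) :=
    τ.symm.injective.comp σ.injective
  have hcard : s.card = (k : ℕ) + 1 := by
    rw [hs, Finset.card_image_of_injective _ hinj, Fin.card_Iic]
  have key := sorted_prefix_min (b ∘ τ) hτ k s hcard
  have hsum : ∑ i ∈ s, (b ∘ τ) i = ∑ j ∈ Finset.Iic k, b (σ j) := by
    rw [hs, Finset.sum_image (fun x _ y _ h => hinj h)]
    simp
  rw [hsum] at key
  exact key
end
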